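/- Let λ_1, …, λ_n be distinct real numbers and let Λ be the n×n Vandermonde matrix with entries Λ_{k,m} = λ_m^{k−1}. Then Λ is invertible and (Λ^{−1})_{k,m} = (−1)^{n−m} σ_{n−m}(λ_1,…,λ_{k−1},λ_{k+1},…,λ_n) / ∏_{j ≠ k} (λ_k − λ_j), where σ_j is the j-th elementary symmetric polynomial in n−1 variables (σ_0 = 1). -/
import Mathlib

open Polynomial Finset Matrix

private lemma key_sum (n : ℕ) (S : Multiset ℝ) (hS : Multiset.card S = n - 1)
    (hn : 0 < n) (x : ℝ) :
    ∑ i : Fin n, ((-1 : ℝ) ^ (n - 1 - (i : ℕ)) * S.esymm (n - 1 - (i : ℕ))) * x ^ (i : ℕ) =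
      (S.map (fun r => x - r)).prod := by
  set P : ℝ[X] := (S.map fun t => X - C t).prod with hP
  have hdeg : P.natDegree = n - 1 := by
    rw [hP, Polynomial.natDegree_multiset_prod_of_monic]
    · simp [Multiset.map_map, Function.comp, hS]
    · intro f hf
      obtain ⟨t, _, rfl⟩ := Multiset.mem_map.mp hf
      exact monic_X_sub_C t
  have heval : P.eval x = (S.map (fun r => x - r)).prod := by
    rw [hP, Polynomial.eval_multiset_prod, Multiset.map_map]
    congr 1
    apply Multiset.map_congr rfl
    intro t _
    simp
  rw [← heval, Polynomial.eval_eq_sum_range' (lt_of_le_of_lt hdeg.le (Nat.sub_lt hn one_pos)),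
    ← Fin.sum_univ_eq_sum_range]
  refine Finset.sum_congr rfl fun i _ => ?_
  rw [hP, Multiset.prod_X_sub_C_coeff S (by omega : (i : ℕ) ≤ Multiset.card S), hS]

/-- Inverse of the Vandermonde matrix: if `λ_1, …, λ_n` are distinct reals and
`Λ_{k,m} = λ_m^{k-1}` (indices zero-based here), then `Λ` is invertible and
`(Λ⁻¹)_{k,m} = (-1)^{n-1-m} σ_{n-1-m}(λ_{≠k}) / ∏_{j≠k} (λ_k - λ_j)`. -/
theorem stmt_10 (n : ℕ) (lam : Fin n → ℝ) (hlam : Function.Injective lam) :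
    IsUnit (Matrix.of fun k m : Fin n => lam m ^ (k : ℕ)).det ∧
      ∀ k m : Fin n,
        (Matrix.of fun k m : Fin n => lam m ^ (k : ℕ))⁻¹ k m =
          (-1 : ℝ) ^ (n - 1 - (m : ℕ)) *
            ((Finset.univ.erase k).val.map lam).esymm (n - 1 - (m : ℕ)) /
            ∏ j ∈ Finset.univ.erase k, (lam k - lam j) := by
  set Λ : Matrix (Fin n) (Fin n) ℝ := Matrix.of fun k m : Fin n => lam m ^ (k : ℕ) with hΛ
  have hT : Λ = (Matrix.vandermonde lam)ᵀ := by
    ext k m; simp [hΛ, Matrix.vandermonde]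
  have hdet : IsUnit Λ.det := by
    rw [hT, Matrix.det_transpose]
    exact isUnit_iff_ne_zero.mpr (Matrix.det_vandermonde_ne_zero_iff.mpr hlam)
  refine ⟨hdet, fun k m => ?_⟩
  have hd : ∀ k : Fin n, (∏ j ∈ Finset.univ.erase k, (lam k - lam j)) ≠ 0 := by
    intro k
    refine Finset.prod_ne_zero_iff.mpr fun j hj => ?_
    have : j ≠ k := (Finset.mem_erase.mp hj).1
    exact sub_ne_zero_of_ne fun h => this (hlam h.symm)
  set B : Matrix (Fin n) (Fin n) ℝ := Matrix.of fun k m : Fin n =>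
    (-1 : ℝ) ^ (n - 1 - (m : ℕ)) *
      ((Finset.univ.erase k).val.map lam).esymm (n - 1 - (m : ℕ)) /
      ∏ j ∈ Finset.univ.erase k, (lam k - lam j) with hB
  have hBΛ : B * Λ = 1 := by
    ext k m
    have hn : 0 < n := Fin.pos k
    have hcard : Multiset.card (((Finset.univ.erase k).val.map lam)) = n - 1 := by
      simp [Finset.card_erase_of_mem]
    rw [Matrix.mul_apply]
    simp only [hB, hΛ, Matrix.of_apply]
    rw [Finset.sum_congr rfl (fun i _ => div_mul_eq_mul_div _ _ _), ← Finset.sum_div,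
      key_sum n _ hcard hn (lam m), Multiset.map_map]
    have hprod : (Multiset.map ((fun r => lam m - r) ∘ lam) (Finset.univ.erase k).val).prod =
        ∏ j ∈ Finset.univ.erase k, (lam m - lam j) := rfl
    rw [hprod]
    by_cases hkm : k = m
    · subst hkm
      rw [div_self (hd k), Matrix.one_apply_eq]
    · rw [Matrix.one_apply_ne hkm]
      have : (∏ j ∈ Finset.univ.erase k, (lam m - lam j)) = 0 :=
        Finset.prod_eq_zero (Finset.mem_erase.mpr ⟨fun h => hkm h.symm, Finset.mem_univ m⟩)
          (sub_self _)
      rw [this, zero_div]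
  have := Matrix.inv_eq_left_inv hBΛ
  rw [this]
  rfl
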